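/- Let a, c be real numbers with c > 0, and let m, n be positive integers with m ≥ n - 1. Define Q_{mn}(z) = ₂F₁(-n, -a-m; -c-m-n+1; z), define P_{mn}(z) = Σ_{r=0}^m p_r z^r with p_r = Σ_{l=0}^r (a)_{r-l} (-n)_l (-a-m)_l / ((-c-m-n+1)_l (c)_{r-l} l!), and define S_{mn} = n! (a)_{m+1} (c-a)_n / ((c)_{m+n} (c+m)_{n+1}). Then for every complex z with |z| < 1, Q_{mn}(z) · ₂F₁(a, 1; c; z) − P_{mn}(z) = S_{mn} · z^{m+n+1} · ₂F₁(a+m+1, n+1; c+m+n+1; z). -/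

import Mathlib

/-!
The coefficients of the Cauchy product of `Q_{mn}(z) = Σ q_l z^l` with
`₂F₁(a,1;c;z) = Σ (a)_k/(c)_k z^k` are `g_r = Σ_{l ≤ r} q_l (a)_{r-l}/(c)_{r-l}`, which is exactly
the formula defining `p_r`, now for every `r`. For `r ≥ n` the sum stops at `l = n`, and once the
denominators are cleared it is a balanced terminating `₃F₂` at `1`. The Pfaff–Saalschütz identity,
proved in polynomial form from Chu–Vandermonde, evaluates it:
`g_r (c)_r (c+m)_n = (a)_{r-n} (r-m-n)_n (c-a)_n`.
The factor `(r-m-n)_n` vanishes for `m < r ≤ m+n` (all such `r` are `≥ n` because `m ≥ n - 1`),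
and for `r = m+n+1+k` the closed form is `S_{mn}` times the `k`-th coefficient of
`₂F₁(a+m+1, n+1; c+m+n+1; z)`.
-/

/-- The Pochhammer symbol `(x)_k = x (x+1) ⋯ (x+k-1)` for a real number `x`. -/

noncomputable def poch (x : ℝ) (k : ℕ) : ℝ := ∏ i ∈ Finset.range k, (x + i)

/-- The Gauss hypergeometric series `₂F₁(a, b; c; z)` with real parameters, for a
complex argument `z` (convergent for `|z| < 1`). -/

noncomputable def hyp2F1 (a b c : ℝ) (z : ℂ) : ℂ :=
  ∑' k : ℕ, (((poch a k * poch b k) / (poch c k * (Nat.factorial k)) : ℝ) : ℂ) * z ^ k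

/-- The denominator polynomial `Q_{mn}(z) = ₂F₁(-n, -a-m; -c-m-n+1; z)` of the
`[m/n]` Padé approximant for `₂F₁(a, 1; c; z)`, as a function of a complex variable. -/

noncomputable def padeDenomFun (m n : ℕ) (a c : ℝ) (z : ℂ) : ℂ :=
  ∑ k ∈ Finset.range (n + 1),
    (((poch (-(n : ℝ)) k * poch (-a - m) k) /
        (poch (-c - m - n + 1) k * (Nat.factorial k)) : ℝ) : ℂ) * z ^ k

/-- The coefficients of the numerator polynomial `P_{mn}` of the `[m/n]` Padé
approximant for `₂F₁(a, 1; c; z)`. -/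

noncomputable def padeNumCoeff (m n : ℕ) (a c : ℝ) (r : ℕ) : ℝ :=
  ∑ l ∈ Finset.range (r + 1),
    (poch a (r - l) * poch (-(n : ℝ)) l * poch (-a - m) l) /
      (poch (-c - m - n + 1) l * poch c (r - l) * (Nat.factorial l))

/-- The numerator polynomial `P_{mn}(z)` of the `[m/n]` Padé approximant for
`₂F₁(a, 1; c; z)`, as a function of a complex variable. -/

noncomputable def padeNumFun (m n : ℕ) (a c : ℝ) (z : ℂ) : ℂ :=
  ∑ r ∈ Finset.range (m + 1), ((padeNumCoeff m n a c r : ℝ) : ℂ) * z ^ r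

/-- The constant `S_{mn} = n! (a)_{m+1} (c-a)_n / ((c)_{m+n} (c+m)_{n+1})`. -/

noncomputable def padeS (m n : ℕ) (a c : ℝ) : ℝ :=
  (Nat.factorial n) * poch a (m + 1) * poch (c - a) n /
    (poch c (m + n) * poch (c + m) (n + 1))

open Finset

lemma poch_eq_eval_ascPochhammer (x : ℝ) (k : ℕ) : poch x k = (ascPochhammer ℝ k).eval x := by
  induction k with
  | zero => simp [poch]
  | succ k ih => rw [poch, prod_range_succ, ← poch, ih, ascPochhammer_succ_eval]

lemma poch_succ (x : ℝ) (k : ℕ) : poch x (k + 1) = poch x k * (x + k) :=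
  prod_range_succ _ _

lemma poch_add (x : ℝ) (i j : ℕ) : poch x (i + j) = poch x i * poch (x + i) j := by
  simp only [poch, prod_range_add, Nat.cast_add, add_assoc]

lemma poch_pos {x : ℝ} (hx : 0 < x) (k : ℕ) : 0 < poch x k := by
  rw [poch_eq_eval_ascPochhammer]
  exact ascPochhammer_pos k x hx

lemma poch_one (k : ℕ) : poch 1 k = k.factorial := by
  rw [poch_eq_eval_ascPochhammer, ascPochhammer_eval_one]

lemma poch_neg (x : ℝ) (k : ℕ) : poch (-x) k = (-1) ^ k * poch (x - k + 1) k := by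
  rw [poch_eq_eval_ascPochhammer, ascPochhammer_eval_neg_eq_descPochhammer,
    descPochhammer_eval_eq_ascPochhammer, poch_eq_eval_ascPochhammer]

lemma poch_neg_natCast (n k : ℕ) : poch (-(n : ℝ)) k = (-1) ^ k * n.descFactorial k := by
  rw [poch_eq_eval_ascPochhammer, ascPochhammer_eval_neg_eq_descPochhammer,
    descPochhammer_eval_eq_descFactorial]

lemma poch_neg_natCast_eq_zero {n k : ℕ} (h : n < k) : poch (-(n : ℝ)) k = 0 := by
  simp [poch_neg_natCast, Nat.descFactorial_eq_zero_iff_lt.2 h]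

lemma factorial_mul_poch_natCast_add_one (r n : ℕ) :
    r.factorial * poch (r + 1) n = (r + n).factorial := by
  rw [poch_eq_eval_ascPochhammer, factorial_mul_ascPochhammer]

lemma poch_vandermonde_antidiagonal (p q : ℝ) (k : ℕ) :
    poch (p + q) k = ∑ ij ∈ antidiagonal k, (k.choose ij.1 : ℝ) * (poch p ij.1 * poch q ij.2) := by
  induction k with
  | zero => simp [poch]
  | succ k ih =>
    rw [sum_antidiagonal_choose_succ_mul (fun i j => poch p i * poch q j), ← sum_add_distrib,
      poch_succ, ih, sum_mul]
    refine sum_congr rfl fun ij hij => ?_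
    rw [HasAntidiagonal.mem_antidiagonal] at hij
    rw [Nat.choose_symm_of_eq_add hij.symm, poch_succ, poch_succ, ← hij]
    push_cast
    ring

lemma poch_vandermonde (p q : ℝ) (k : ℕ) :
    poch (p + q) k = ∑ j ∈ range (k + 1), (k.choose j : ℝ) * poch p j * poch q (k - j) := by
  simp only [poch_vandermonde_antidiagonal, Nat.sum_antidiagonal_eq_sum_range_succ
    (fun i j => (k.choose i : ℝ) * (poch p i * poch q j)), mul_assoc]

lemma sum_choose_mul_poch_mul_poch_sub (x u : ℝ) {k n : ℕ} (hk : k ≤ n) :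
    ∑ i ∈ range (k + 1), (k.choose i : ℝ) * poch x i * poch u (n - i)
      = poch u (n - k) * poch (x + (u + (n - k : ℕ))) k := by
  rw [poch_vandermonde, mul_sum]
  refine sum_congr rfl fun i hi => ?_
  rw [show n - i = (n - k) + (k - i) by grind, poch_add]
  ring

lemma poch_saalschutz (x y u : ℝ) (n : ℕ) :
    ∑ l ∈ range (n + 1), (n.choose l : ℝ) * poch x l * poch y l * poch u (n - l)
        * poch (x + y + u + l) (n - l)
      = poch (x + u) n * poch (y + u) n := by
  set F : ℕ → ℕ → ℝ := fun l j => (n.choose l : ℝ) * ((n - l).choose j : ℝ) * poch x l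
    * poch y (l + j) * poch u (n - l) * poch (x + u) (n - l - j)
  have expand (l : ℕ) (hl : l ∈ range (n + 1)) :
      (n.choose l : ℝ) * poch x l * poch y l * poch u (n - l) * poch (x + y + u + l) (n - l)
        = ∑ j ∈ range (n + 1 - l), F l j := by
    rw [show x + y + u + l = (y + l) + (x + u) by ring, poch_vandermonde, mul_sum,
      show n + 1 - l = n - l + 1 by grind]
    refine sum_congr rfl fun j _ => ?_
    simp only [F, poch_add]
    ring
  have regroup (k : ℕ) (hk : k ∈ range (n + 1)) :
      ∑ i ∈ range (k + 1), F i (k - i)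
        = poch (x + u) n * ((n.choose k : ℝ) * poch y k * poch u (n - k)) := by
    have hkn : k ≤ n := by grind
    have hF (i : ℕ) (hi : i ∈ range (k + 1)) :
        F i (k - i) = (n.choose k : ℝ) * poch y k * poch (x + u) (n - k)
          * ((k.choose i : ℝ) * poch x i * poch u (n - i)) := by
      have hik : i ≤ k := by grind
      have hchoose : (n.choose i : ℝ) * ((n - i).choose (k - i) : ℝ)
          = (n.choose k : ℝ) * (k.choose i : ℝ) := by
        exact_mod_cast (Nat.choose_mul hik).symm
      simp only [F, show i + (k - i) = k by grind, show n - i - (k - i) = n - k by grind]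
      linear_combination (poch x i * poch y k * poch u (n - i) * poch (x + u) (n - k)) * hchoose
    rw [sum_congr rfl hF, ← mul_sum, sum_choose_mul_poch_mul_poch_sub x u hkn]
    rw [show poch (x + u) n = poch (x + u) (n - k) * poch (x + (u + (n - k : ℕ))) k by
      rw [← add_assoc, ← poch_add, Nat.sub_add_cancel hkn]]
    ring
  rw [sum_congr rfl expand, ← sum_range_diag_flip, sum_congr rfl regroup, ← mul_sum,
    poch_vandermonde y u]

noncomputable def hypCoeff (a b c : ℝ) (k : ℕ) : ℝ :=
  poch a k * poch b k / (poch c k * k.factorial)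

lemma hypCoeff_one (a c : ℝ) (k : ℕ) : hypCoeff a 1 c k = poch a k / poch c k := by
  rw [hypCoeff, poch_one, mul_div_mul_right _ _ (by positivity)]

lemma hypCoeff_neg_natCast (n : ℕ) (b d : ℝ) (l : ℕ) :
    hypCoeff (-n) b (-d - n + 1) l = n.choose l * poch b l / poch (d + n - l) l := by
  rw [hypCoeff, poch_neg_natCast, Nat.descFactorial_eq_factorial_mul_choose,
    show -d - n + 1 = -(d + n - 1) by ring, poch_neg, show d + n - 1 - l + 1 = d + n - l by ring]
  push_cast
  rw [show (-1 : ℝ) ^ l * (l.factorial * n.choose l) * poch b l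
      = ((-1) ^ l * l.factorial) * (n.choose l * poch b l) by ring,
    show (-1 : ℝ) ^ l * poch (d + n - l) l * l.factorial
      = ((-1) ^ l * l.factorial) * poch (d + n - l) l by ring,
    mul_div_mul_left _ _ (by positivity)]

lemma hypCoeff_neg_natCast_eq_zero {n l : ℕ} (h : n < l) (b c : ℝ) : hypCoeff (-n) b c l = 0 := by
  rw [hypCoeff, poch_neg_natCast_eq_zero h, zero_mul, zero_div]

lemma hypCoeff_eq_ordinaryHypergeometricCoefficient (a b c : ℝ) (k : ℕ) :
    hypCoeff a b c k = ordinaryHypergeometricCoefficient a b c k := by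
  simp only [hypCoeff, ordinaryHypergeometricCoefficient, poch_eq_eval_ascPochhammer]
  ring

lemma one_le_radius_ordinaryHypergeometricSeries {𝕂 : Type*} [RCLike 𝕂] (𝔸 : Type*)
    [NormedDivisionRing 𝔸] [NormedAlgebra 𝕂 𝔸] {a b c : 𝕂} (hc : ∀ k : ℕ, (k : 𝕂) ≠ -c) :
    1 ≤ (ordinaryHypergeometricSeries 𝔸 a b c).radius := by
  by_cases hab : ∃ k : ℕ, (k : 𝕂) = -a ∨ (k : 𝕂) = -b
  · obtain ⟨k, hk | hk⟩ := hab
    · rw [neg_eq_iff_eq_neg.1 hk.symm, ordinaryHypergeometric_radius_top_of_neg_nat₁]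
      exact le_top
    · rw [neg_eq_iff_eq_neg.1 hk.symm, ordinaryHypergeometric_radius_top_of_neg_nat₂]
      exact le_top
  · push Not at hab
    exact (ordinaryHypergeometricSeries_radius_eq_one 𝔸 a b c fun k =>
      ⟨(hab k).1, (hab k).2, hc k⟩).ge

lemma summable_norm_hypCoeff_mul_pow {a b c : ℝ} (hc : ∀ k : ℕ, (k : ℝ) ≠ -c) {z : ℂ}
    (hz : ‖z‖ < 1) :
    Summable fun k => ‖(hypCoeff a b c k : ℂ) * z ^ k‖ := by
  have hz' : z ∈ Metric.eball (0 : ℂ) (ordinaryHypergeometricSeries ℂ a b c).radius := by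
    rw [mem_eball_zero_iff]
    refine lt_of_lt_of_le ?_ (one_le_radius_ordinaryHypergeometricSeries ℂ hc)
    rwa [← ofReal_norm, ENNReal.ofReal_lt_one]
  convert (ordinaryHypergeometricSeries ℂ a b c).summable_norm_apply hz' using 2 with k
  rw [ordinaryHypergeometricSeries_apply_eq, Complex.real_smul,
    hypCoeff_eq_ordinaryHypergeometricCoefficient]

lemma padeNumCoeff_eq_sum_hypCoeff (m n : ℕ) (a c : ℝ) (r : ℕ) :
    padeNumCoeff m n a c r
      = ∑ l ∈ range (r + 1),
          hypCoeff (-n) (-a - m) (-c - m - n + 1) l * hypCoeff a 1 c (r - l) := by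
  refine sum_congr rfl fun l _ => ?_
  rw [hypCoeff_one, hypCoeff, div_mul_div_comm]
  ring

lemma padeNumCoeff_eq_sum_range_of_le (m : ℕ) {n r : ℕ} (hnr : n ≤ r) (a c : ℝ) :
    padeNumCoeff m n a c r
      = ∑ l ∈ range (n + 1),
          hypCoeff (-n) (-a - m) (-c - m - n + 1) l * hypCoeff a 1 c (r - l) := by
  rw [padeNumCoeff_eq_sum_hypCoeff]
  refine (sum_subset (range_subset_range.2 (by omega)) fun l _ hl => ?_).symm
  rw [hypCoeff_neg_natCast_eq_zero (by simpa using hl), zero_mul]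

lemma padeNumCoeff_term_mul {m n r l : ℕ} {a c : ℝ} (hc : 0 < c) (hln : l ≤ n) (hnr : n ≤ r) :
    hypCoeff (-n) (-a - m) (-c - m - n + 1) l * hypCoeff a 1 c (r - l)
        * (poch c r * poch (c + m) n)
      = poch a (r - n) * ((n.choose l : ℝ) * poch (-a - m) l * poch (c + r - l) l
          * poch (a + (r - n : ℕ)) (n - l) * poch (c + m) (n - l)) := by
  have hpoch_c : poch c r = poch c (r - l) * poch (c + r - l) l := by
    rw [← Nat.sub_add_cancel (hln.trans hnr), poch_add, Nat.sub_add_cancel (hln.trans hnr),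
      Nat.cast_sub (hln.trans hnr), add_sub_assoc]
  have hpoch_cm : poch (c + m) n = poch (c + m) (n - l) * poch (c + m + n - l) l := by
    rw [← Nat.sub_add_cancel hln, poch_add, Nat.sub_add_cancel hln, Nat.cast_sub hln,
      add_sub_assoc]
  have hpoch_a : poch a (r - l) = poch a (r - n) * poch (a + (r - n : ℕ)) (n - l) := by
    rw [← poch_add]
    congr 1
    omega
  have h1 : poch c (r - l) ≠ 0 := (poch_pos hc _).ne'
  have h2 : poch (c + m + n - l) l ≠ 0 := by
    refine (poch_pos ?_ _).ne'
    have : (l : ℝ) ≤ n := by exact_mod_cast hln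
    linarith [(m.cast_nonneg : (0 : ℝ) ≤ m)]
  rw [show -c - m - n + 1 = -(c + m) - n + 1 by ring, hypCoeff_neg_natCast, hypCoeff_one,
    hpoch_c, hpoch_cm, hpoch_a]
  field_simp

lemma padeNumCoeff_mul_poch_mul_poch {m n r : ℕ} {a c : ℝ} (hc : 0 < c) (hnr : n ≤ r) :
    padeNumCoeff m n a c r * (poch c r * poch (c + m) n)
      = poch a (r - n) * (poch ((r : ℝ) - m - n) n * poch (c - a) n) := by
  rw [padeNumCoeff_eq_sum_range_of_le m hnr, sum_mul,
    sum_congr rfl fun l hl => padeNumCoeff_term_mul hc (Nat.lt_succ_iff.1 (mem_range.1 hl)) hnr,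
    ← mul_sum]
  congr 1
  have hA : ((r - n : ℕ) : ℝ) = r - n := Nat.cast_sub hnr
  convert poch_saalschutz (a + (r - n : ℕ)) (c + m) (-a - m) n using 1
  · rw [← sum_range_reflect]
    refine sum_congr rfl fun j hj => ?_
    have hjn : j ≤ n := Nat.lt_succ_iff.1 (mem_range.1 hj)
    rw [show n + 1 - 1 - j = n - j by omega, Nat.sub_sub_self hjn, Nat.choose_symm hjn,
      Nat.cast_sub hjn, hA, show a + (r - n) + (c + m) + (-a - m) + j = c + r - (n - j) by ring]
    ring
  · rw [hA]
    congr 2 <;> ring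

lemma padeNumCoeff_eq_zero {m n r : ℕ} {a c : ℝ} (hc : 0 < c) (hnr : n ≤ r) (hmr : m < r)
    (hrmn : r ≤ m + n) : padeNumCoeff m n a c r = 0 := by
  have hvanish : poch ((r : ℝ) - m - n) n = 0 := by
    rw [show (r : ℝ) - m - n = -((m + n - r : ℕ) : ℝ) by push_cast [Nat.cast_sub hrmn]; ring]
    exact poch_neg_natCast_eq_zero (by omega)
  have hD : poch c r * poch (c + m) n ≠ 0 :=
    (mul_pos (poch_pos hc _) (poch_pos (by positivity) _)).ne'
  simpa [hvanish, hD] using padeNumCoeff_mul_poch_mul_poch (m := m) (a := a) hc hnr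

lemma padeNumCoeff_add_eq_padeS_mul_hypCoeff {m n : ℕ} {a c : ℝ} (hc : 0 < c) (k : ℕ) :
    padeNumCoeff m n a c (k + (m + n + 1))
      = padeS m n a c * hypCoeff (a + m + 1) (n + 1) (c + m + n + 1) k := by
  have hD : poch c (k + (m + n + 1)) * poch (c + m) n ≠ 0 :=
    (mul_pos (poch_pos hc _) (poch_pos (by positivity) _)).ne'
  refine mul_right_cancel₀ hD ?_
  rw [padeNumCoeff_mul_poch_mul_poch hc (by omega), show k + (m + n + 1) - n = (m + 1) + k by omega,
    poch_add a, show ((k + (m + n + 1) : ℕ) : ℝ) - m - n = k + 1 by push_cast; ring,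
    show k + (m + n + 1) = (m + n) + 1 + k by omega, poch_add c, poch_succ c,
    padeS, hypCoeff, poch_succ (c + m)]
  have hfact : poch ((k : ℝ) + 1) n = n.factorial * poch ((n : ℝ) + 1) k / k.factorial := by
    rw [eq_div_iff (by positivity), mul_comm, factorial_mul_poch_natCast_add_one,
      factorial_mul_poch_natCast_add_one, add_comm]
  have h1 : poch c (m + n) ≠ 0 := (poch_pos hc _).ne'
  have h2 : poch (c + m) n ≠ 0 := (poch_pos (by positivity) _).ne'
  have h3 : poch (c + m + n + 1) k ≠ 0 := (poch_pos (by positivity) _).ne'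
  have h4 : c + m + n ≠ 0 := by positivity
  rw [hfact]
  simp only [Nat.cast_add, Nat.cast_one, ← add_assoc]
  field_simp

lemma hasSum_padeNumCoeff_mul_pow (m n : ℕ) (a : ℝ) {c : ℝ} (hc : 0 < c) {z : ℂ} (hz : ‖z‖ < 1) :
    HasSum (fun r => (padeNumCoeff m n a c r : ℂ) * z ^ r)
      (padeDenomFun m n a c z * hyp2F1 a 1 c z) := by
  set q : ℕ → ℂ := fun l => (hypCoeff (-n) (-a - m) (-c - m - n + 1) l : ℂ) * z ^ l
  set f : ℕ → ℂ := fun k => (hypCoeff a 1 c k : ℂ) * z ^ k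
  have hq_zero (l : ℕ) (hl : l ∉ range (n + 1)) : q l = 0 := by
    simp [q, hypCoeff_neg_natCast_eq_zero (by simpa using hl)]
  have hQ : padeDenomFun m n a c z = ∑' l, q l := (tsum_eq_sum hq_zero).symm
  have hF : hyp2F1 a 1 c z = ∑' k, f k := rfl
  have hf : Summable fun k => ‖f k‖ :=
    summable_norm_hypCoeff_mul_pow (fun k h => by linarith [(k.cast_nonneg : (0 : ℝ) ≤ k)]) hz
  have hq : Summable fun l => ‖q l‖ :=
    summable_of_ne_finset_zero fun l hl => by rw [hq_zero l hl, norm_zero]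
  have hcoeff (r : ℕ) :
      (padeNumCoeff m n a c r : ℂ) * z ^ r = ∑ l ∈ range (r + 1), q l * f (r - l) := by
    rw [padeNumCoeff_eq_sum_hypCoeff, Complex.ofReal_sum, sum_mul]
    refine sum_congr rfl fun l hl => ?_
    rw [← pow_mul_pow_sub z (Nat.lt_succ_iff.1 (mem_range.1 hl))]
    push_cast
    ring
  rw [hQ, hF]
  simp_rw [hcoeff]
  exact hasSum_sum_range_mul_of_summable_norm hq hf

lemma sum_range_padeNumCoeff_mul_pow {m n : ℕ} (a : ℝ) {c : ℝ} (hc : 0 < c) (hmn : n - 1 ≤ m)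
    (z : ℂ) :
    ∑ r ∈ range (m + n + 1), (padeNumCoeff m n a c r : ℂ) * z ^ r = padeNumFun m n a c z := by
  have hvanish : ∑ r ∈ Ico (m + 1) (m + n + 1), (padeNumCoeff m n a c r : ℂ) * z ^ r = 0 := by
    refine sum_eq_zero fun r hr => ?_
    rw [mem_Ico] at hr
    rw [padeNumCoeff_eq_zero hc (by omega) (by omega) (by omega), Complex.ofReal_zero, zero_mul]
  rw [range_eq_Ico, ← sum_Ico_consecutive _ (Nat.zero_le (m + 1)) (by omega : m + 1 ≤ m + n + 1),
    hvanish, add_zero, ← range_eq_Ico, padeNumFun]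

theorem pade_remainder_formula_general (a c : ℝ) (hc : 0 < c)
    (m n : ℕ) (hmn : n - 1 ≤ m) :
    ∀ z : ℂ, ‖z‖ < 1 →
      padeDenomFun m n a c z * hyp2F1 a 1 c z - padeNumFun m n a c z =
        ((padeS m n a c : ℝ) : ℂ) * z ^ (m + n + 1) *
          hyp2F1 (a + m + 1) (n + 1) (c + m + n + 1) z := by
  intro z hz
  have htail := (hasSum_nat_add_iff' (m + n + 1)).2 (hasSum_padeNumCoeff_mul_pow m n a hc hz)
  rw [sum_range_padeNumCoeff_mul_pow a hc hmn] at htail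
  rw [← htail.tsum_eq, hyp2F1, ← tsum_mul_left]
  refine tsum_congr fun k => ?_
  rw [padeNumCoeff_add_eq_padeS_mul_hypCoeff hc, pow_add, hypCoeff]
  push_cast
  ring

/-- Padé's explicit formula for the remainder: for `|z| < 1`,
`Q_{mn}(z) ₂F₁(a,1;c;z) − P_{mn}(z) = S_{mn} z^{m+n+1} ₂F₁(a+m+1, n+1; c+m+n+1; z)`. -/
theorem pade_remainder_formula (a c : ℝ) (hc : 0 < c)
    (m n : ℕ) (hm : 0 < m) (hn : 0 < n) (hmn : n - 1 ≤ m) :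
    ∀ z : ℂ, ‖z‖ < 1 →
      padeDenomFun m n a c z * hyp2F1 a 1 c z - padeNumFun m n a c z =
        ((padeS m n a c : ℝ) : ℂ) * z ^ (m + n + 1) *
          hyp2F1 (a + m + 1) (n + 1) (c + m + n + 1) z :=
  pade_remainder_formula_general a c hc m n hmn
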